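/- arXiv:1710.02877 — 2 statements merged into one kernel-verified Lean document; each statement's English description precedes it below -/
import Mathlib

section
/- Let G₁, …, Gₙ be NFAs over alphabets Σ₁, …, Σₙ and let Σ_o ⊆ ⋃ᵢ Σᵢ be a set of observable events such that every event shared by two distinct systems is observable (i.e., Σᵢ ∩ Σⱼ ⊆ Σ_o for i ≠ j). Let P be the projection to Σ_o. Then for every word w, a state (x₁, …, xₙ) is reachable in the parallel composition G₁ ‖ ⋯ ‖ Gₙ by some word w' with P(w') = P(w) if and only if for every i, the state xᵢ is reachable in Gᵢ by some word wᵢ with P(wᵢ) restricted to Σᵢ ∩ Σ_o equal to the corresponding restriction of P(w). -/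
/-!
A run of the synchronous product is exactly a word over `⋃ i, Σᵢ` whose projection to each `Σᵢ`
is a run of `Gᵢ`, so the theorem is a statement about words: given words `wᵢ` over `Σᵢ` that
agree with an observation `ω` on `Σᵢ ∩ Σ_o`, find one word projecting to every `wᵢ` and
observed as `ω`. Cut each `wᵢ` at its first observable letter. The unobservable prefixes are
private, because shared events are observable, so they can be concatenated one component after
the other without disturbing the other projections; then the first letter of `ω` is performed
synchronously by all components that share it, and we continue with the rest of `ω`.
-/

/-- A nondeterministic finite automaton (all states marked): transition relation and initial states. -/
structure NFA' (Q E : Type) where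
  δ : Q → E → Set Q
  I : Set Q

/-- Extended transition function on sets of states. -/
def NFA'.run {Q E : Type} (A : NFA' Q E) : List E → Set Q → Set Q
  | [], S => S
  | a :: w, S => A.run w {q | ∃ p ∈ S, q ∈ A.δ p a}

/-- The language generated by the automaton. -/
def NFA'.lang {Q E : Type} (A : NFA' Q E) : Set (List E) :=
  {w | (A.run w A.I).Nonempty}

-- The natural projection to the observable events `S`: erase all events outside `S`.
open Classical in
noncomputable def proj {E : Type} (S : Set E) : List E → List E
  | [] => []
  | a :: w => if a ∈ S then a :: proj S w else proj S w

/-- Parallel (synchronous) composition of a family of NFAs `A i` with alphabets `S i`: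
on an event `a`, every component whose alphabet contains `a` makes an `a`-transition,
all other components stay put; events outside `⋃ i, S i` are blocked. -/
def parN {n : ℕ} {E : Type} {Qs : Fin n → Type} (S : Fin n → Set E)
    (A : ∀ i, NFA' (Qs i) E) : NFA' (∀ i, Qs i) E where
  δ := fun p a =>
    {q | (∃ i, a ∈ S i) ∧
         ∀ i, (a ∈ S i → q i ∈ (A i).δ (p i) a) ∧ (a ∉ S i → q i = p i)}
  I := {p | ∀ i, p i ∈ (A i).I}

section Projection

variable {E : Type} {T U : Set E}

open Classical in
theorem proj_eq_filter (T : Set E) (w : List E) : proj T w = w.filter fun a => decide (a ∈ T) := by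
  induction w with
  | nil => rfl
  | cons a w ih => by_cases h : a ∈ T <;> simp [proj, h, ih]

theorem mem_proj {w : List E} {a : E} : a ∈ proj T w ↔ a ∈ w ∧ a ∈ T := by
  simp [proj_eq_filter]

theorem proj_append (u v : List E) : proj T (u ++ v) = proj T u ++ proj T v := by
  simp [proj_eq_filter]

theorem proj_eq_nil_iff {w : List E} : proj T w = [] ↔ ∀ a ∈ w, a ∉ T := by
  simp [proj_eq_filter]

theorem proj_eq_self_iff {w : List E} : proj T w = w ↔ ∀ a ∈ w, a ∈ T := by
  simp [proj_eq_filter]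

theorem proj_proj (w : List E) : proj T (proj U w) = proj (T ∩ U) w := by
  simp only [proj_eq_filter, List.filter_filter]
  refine List.filter_congr fun a _ => ?_
  rw [Bool.eq_iff_iff]
  simp

theorem proj_proj_of_subset (h : T ⊆ U) (w : List E) : proj T (proj U w) = proj T w := by
  rw [proj_proj, Set.inter_eq_left.2 h]

theorem proj_flatMap {ι : Type} (L : List ι) (f : ι → List E) :
    proj T (L.flatMap f) = L.flatMap fun i => proj T (f i) := by
  simp [proj_eq_filter, List.filter_flatMap]

theorem proj_eq_cons_iff {w t : List E} {a : E} :
    proj T w = a :: t ↔ ∃ u v, w = u ++ a :: v ∧ (∀ b ∈ u, b ∉ T) ∧ a ∈ T ∧ proj T v = t := by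
  simp [proj_eq_filter, List.filter_eq_cons_iff]

theorem exists_split_of_proj_eq_proj_cons {x ω : List E} {a : E}
    (h : proj U x = proj T (a :: ω)) :
    ∃ u v, x = u ++ proj T [a] ++ v ∧ (∀ b ∈ u, b ∉ U) ∧ proj U v = proj T ω := by
  by_cases ha : a ∈ T
  · rw [proj, if_pos ha] at h
    obtain ⟨u, v, rfl, hu, -, hv⟩ := proj_eq_cons_iff.1 h
    exact ⟨u, v, by simp [proj, ha], hu, hv⟩
  · exact ⟨[], x, by simp [proj, ha], by simp, by simpa [proj, ha] using h⟩

end Projection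

theorem List.flatMap_eq_of_forall_ne_eq_nil {ι β : Type} {L : List ι} (hL : L.Nodup) {j : ι}
    (hj : j ∈ L) {f : ι → List β} (hf : ∀ i ≠ j, f i = []) : L.flatMap f = f j := by
  induction L with
  | nil => simp at hj
  | cons i L ih =>
    obtain ⟨hiL, hL⟩ := List.nodup_cons.1 hL
    rw [List.flatMap_cons]
    by_cases hij : i = j
    · subst hij
      rw [List.flatMap_eq_nil_iff.2 fun k hk => hf k (ne_of_mem_of_not_mem hk hiL),
        List.append_nil]
    · rw [hf i hij, List.nil_append, ih hL ((List.mem_cons.1 hj).resolve_left (Ne.symm hij))]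

section Interleaving

variable {ι E : Type} (S : ι → Set E) (So : Set E)

structure IsInterleaving (ws : ι → List E) (ω w : List E) : Prop where
  mem_iUnion : ∀ a ∈ w, ∃ i, a ∈ S i
  proj_observed : proj So w = ω
  proj_component : ∀ i, proj (S i) w = ws i

theorem isInterleaving_nil : IsInterleaving S So (fun _ => []) [] [] :=
  ⟨by simp, rfl, fun _ => rfl⟩

variable {S So}

theorem IsInterleaving.cons {ws : ι → List E} {ω w : List E} {a : E} (ha : a ∈ So)
    (hS : ∃ i, a ∈ S i) (h : IsInterleaving S So ws ω w) :
    IsInterleaving S So (fun i => proj (S i) [a] ++ ws i) (a :: ω) (a :: w) where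
  mem_iUnion := List.forall_mem_cons.2 ⟨hS, h.mem_iUnion⟩
  proj_observed := by simp [proj, ha, h.proj_observed]
  proj_component i := by rw [← List.singleton_append, proj_append, h.proj_component]

theorem IsInterleaving.flatMap_append [Fintype ι] (hshared : Pairwise fun i j => S i ∩ S j ⊆ So)
    {ws : ι → List E} {ω w : List E} (u : ι → List E) (hu : ∀ i, ∀ b ∈ u i, b ∈ S i ∧ b ∉ So)
    (h : IsInterleaving S So ws ω w) :
    IsInterleaving S So (fun i => u i ++ ws i) ω (Finset.univ.toList.flatMap u ++ w) where
  mem_iUnion b hb := by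
    rcases List.mem_append.1 hb with hb | hb
    · obtain ⟨i, -, hb⟩ := List.mem_flatMap.1 hb
      exact ⟨i, (hu i b hb).1⟩
    · exact h.mem_iUnion b hb
  proj_observed := by
    rw [proj_append, h.proj_observed, proj_eq_nil_iff.2, List.nil_append]
    intro b hb
    obtain ⟨i, -, hb⟩ := List.mem_flatMap.1 hb
    exact (hu i b hb).2
  proj_component j := by
    have hprivate : ∀ i ≠ j, proj (S j) (u i) = [] := fun i hij =>
      proj_eq_nil_iff.2 fun b hb hbj => (hu i b hb).2 (hshared hij ⟨(hu i b hb).1, hbj⟩)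
    rw [proj_append, proj_flatMap, h.proj_component,
      List.flatMap_eq_of_forall_ne_eq_nil (Finset.nodup_toList _)
        (Finset.mem_toList.2 (Finset.mem_univ j)) hprivate,
      proj_eq_self_iff.2 fun b hb => (hu j b hb).1]

theorem exists_isInterleaving [Fintype ι] (hshared : Pairwise fun i j => S i ∩ S j ⊆ So)
    (ω : List E) (hω : ∀ a ∈ ω, a ∈ So ∧ ∃ i, a ∈ S i) (ws : ι → List E)
    (hws : ∀ i, ∀ a ∈ ws i, a ∈ S i) (hobs : ∀ i, proj So (ws i) = proj (S i) ω) :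
    ∃ w, IsInterleaving S So ws ω w := by
  induction ω generalizing ws with
  | nil =>
    have h := (isInterleaving_nil S So).flatMap_append hshared ws
      fun i b hb => ⟨hws i b hb, proj_eq_nil_iff.1 (hobs i) b hb⟩
    simp only [List.append_nil] at h
    exact ⟨_, h⟩
  | cons a ω ih =>
    obtain ⟨haSo, haS⟩ := hω a List.mem_cons_self
    choose u v hsplit hu hv using fun i => exists_split_of_proj_eq_proj_cons (hobs i)
    have hmem : ∀ i, ∀ b ∈ u i ++ v i, b ∈ S i := fun i b hb =>
      hws i b (by rw [hsplit i]; aesop)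
    obtain ⟨w, hw⟩ := ih (fun b hb => hω b (List.mem_cons_of_mem a hb)) v
      (fun i b hb => hmem i b (List.mem_append_right _ hb)) hv
    have h := (hw.cons haSo haS).flatMap_append hshared u
      fun i b hb => ⟨hmem i b (List.mem_append_left _ hb), hu i b hb⟩
    have hws_eq : ws = fun i => u i ++ (proj (S i) [a] ++ v i) :=
      funext fun i => by rw [hsplit i, List.append_assoc]
    exact ⟨_, hws_eq ▸ h⟩

end Interleaving

namespace NFA'

variable {Q E : Type} (A : NFA' Q E)

inductive Path : Q → List E → Q → Prop
  | nil (p : Q) : Path p [] p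
  | cons {p q r : Q} {a : E} {w : List E} : q ∈ A.δ p a → Path q w r → Path p (a :: w) r

variable {A}

theorem path_nil_iff {p q : Q} : A.Path p [] q ↔ p = q :=
  ⟨fun h => by cases h; rfl, fun h => h ▸ Path.nil p⟩

theorem path_cons_iff {p r : Q} {a : E} {w : List E} :
    A.Path p (a :: w) r ↔ ∃ q ∈ A.δ p a, A.Path q w r :=
  ⟨fun h => by cases h with | cons hq hw => exact ⟨_, hq, hw⟩,
    fun ⟨_, hq, hw⟩ => Path.cons hq hw⟩

theorem mem_run_iff {w : List E} {P : Set Q} {q : Q} : q ∈ A.run w P ↔ ∃ p ∈ P, A.Path p w q := by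
  induction w generalizing P with
  | nil => simp [run, path_nil_iff]
  | cons a w ih => simp only [run, ih, path_cons_iff]; aesop

theorem Path.forall_mem {T : Set E} (hT : ∀ q, ∀ a ∉ T, A.δ q a = ∅) {p q : Q} {w : List E}
    (h : A.Path p w q) : ∀ a ∈ w, a ∈ T := by
  induction h with
  | nil => simp
  | @cons p _ _ a _ hstep _ ih =>
    refine List.forall_mem_cons.2 ⟨by_contra fun ha => ?_, ih⟩
    simp [hT p a ha] at hstep

end NFA'

theorem parN_path_iff {n : ℕ} {E : Type} {Qs : Fin n → Type} (S : Fin n → Set E)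
    (A : ∀ i, NFA' (Qs i) E) {p x : ∀ i, Qs i} {w : List E} :
    (parN S A).Path p w x ↔
      (∀ a ∈ w, ∃ i, a ∈ S i) ∧ ∀ i, (A i).Path (p i) (proj (S i) w) (x i) := by
  induction w generalizing p with
  | nil => simp [NFA'.path_nil_iff, proj, funext_iff]
  | cons a w ih =>
    simp only [NFA'.path_cons_iff, ih, List.forall_mem_cons]
    constructor
    · rintro ⟨q, ⟨haS, hq⟩, hw, hpath⟩
      refine ⟨⟨haS, hw⟩, fun i => ?_⟩
      by_cases ha : a ∈ S i
      · simpa [proj, ha] using NFA'.Path.cons ((hq i).1 ha) (hpath i)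
      · simpa [proj, ha, (hq i).2 ha] using hpath i
    · rintro ⟨⟨haS, hw⟩, hpath⟩
      have hstep : ∀ i, ∃ qi, ((a ∈ S i → qi ∈ (A i).δ (p i) a) ∧ (a ∉ S i → qi = p i)) ∧
          (A i).Path qi (proj (S i) w) (x i) := fun i => by
        by_cases ha : a ∈ S i
        · obtain ⟨qi, hqi, hpath⟩ := NFA'.path_cons_iff.1 (by simpa [proj, ha] using hpath i)
          exact ⟨qi, ⟨fun _ => hqi, fun h => absurd ha h⟩, hpath⟩
        · exact ⟨p i, ⟨fun h => absurd h ha, fun _ => rfl⟩, by simpa [proj, ha] using hpath i⟩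
      choose q hq hpath using hstep
      exact ⟨q, ⟨haS, hq⟩, hw, hpath⟩

/-- if all events shared by two distinct modules are observable
(`Σᵢ ∩ Σⱼ ⊆ Σ_o` for `i ≠ j`) and each module only moves on events of its own
alphabet, then for every word `w` over `⋃ i, Σᵢ`: a state `(x₁, …, xₙ)` is
reachable in `G₁ ‖ ⋯ ‖ Gₙ` by some word `w'` with `P(w') = P(w)` iff for every
`i` the state `xᵢ` is reachable in `Gᵢ` by some word `wᵢ` whose restriction to
`Σᵢ ∩ Σ_o` equals the corresponding restriction of `w`. -/
theorem parN_reachable_up_to_observation_iff_componentwise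
    {n : ℕ} {E : Type} {Qs : Fin n → Type}
    (S : Fin n → Set E) (So : Set E) (A : ∀ i, NFA' (Qs i) E)
    (hshared : ∀ i j, i ≠ j → S i ∩ S j ⊆ So)
    (hown : ∀ i (q : Qs i) (a : E), a ∉ S i → (A i).δ q a = ∅)
    (w : List E) (hw : ∀ a ∈ w, ∃ i, a ∈ S i) (x : ∀ i, Qs i) :
    (∃ w' : List E, (∀ a ∈ w', ∃ i, a ∈ S i) ∧ proj So w' = proj So w ∧
        x ∈ (parN S A).run w' (parN S A).I) ↔
      (∀ i, ∃ wi : List E, proj (S i ∩ So) wi = proj (S i ∩ So) w ∧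
        x i ∈ (A i).run wi (A i).I) := by
  constructor
  · rintro ⟨w', -, hobs, hx⟩ i
    obtain ⟨p, hp, hpath⟩ := NFA'.mem_run_iff.1 hx
    refine ⟨proj (S i) w', ?_, NFA'.mem_run_iff.2 ⟨p i, hp i, ((parN_path_iff S A).1 hpath).2 i⟩⟩
    rw [proj_proj_of_subset Set.inter_subset_left,
      ← proj_proj_of_subset Set.inter_subset_right w', hobs,
      proj_proj_of_subset Set.inter_subset_right]
  · intro h
    choose ws hobs hrun using h
    choose p hp hpath using fun i => NFA'.mem_run_iff.1 (hrun i)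
    have hws : ∀ i, ∀ a ∈ ws i, a ∈ S i := fun i => (hpath i).forall_mem (hown i)
    have hobs' : ∀ i, proj So (ws i) = proj (S i) (proj So w) := fun i => by
      rw [proj_proj, ← hobs i, Set.inter_comm, ← proj_proj, proj_eq_self_iff.2 (hws i)]
    obtain ⟨w', hw'⟩ := exists_isInterleaving hshared (proj So w)
      (fun a ha => ⟨(mem_proj.1 ha).2, hw a (mem_proj.1 ha).1⟩) ws hws hobs'
    refine ⟨w', hw'.mem_iUnion, hw'.proj_observed, NFA'.mem_run_iff.2 ⟨p, hp, ?_⟩⟩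
    exact (parN_path_iff S A).2 ⟨hw'.mem_iUnion, fun i => hw'.proj_component i ▸ hpath i⟩
end

section
/- Suppose the state space of a DES G is partitioned as Q = Q_N ∪ Q_F (disjoint) such that for every word s ∈ L(G), every state in δ(I,s) lies in Q_F if and only if s contains a fault event, and lies in Q_N otherwise. Then G is A-diagnosable with respect to Σ_uo and Σ_F if and only if: for every s ∈ L(G) with δ(I,s) ⊆ Q_F, there exists t ∈ L(G)/s such that R_G(st) ⊆ Q_F. -/
/-- The current-state estimate `R_G(t)` after observing `P(t)`,
where `So` is the set of observable events. -/
def Rst {Q E : Type} (A : NFA' Q E) (So : Set E) (t : List E) : Set Q :=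
  {x | ∃ t' ∈ A.lang, proj So t' = proj So t ∧ x ∈ A.run t' A.I}

/-- A word is faulty if it contains a fault event (`w ∈ L_F = Σ*Σ_FΣ*`). -/
def Faulty {E : Type} (SF : Set E) (w : List E) : Prop := ∃ a ∈ w, a ∈ SF

/-- A-diagnosability w.r.t. observable events `So` and fault events `SF`:
every faulty word has an extension after which every observation-equivalent
word of the system is faulty. -/
def ADiagnosable {Q E : Type} (A : NFA' Q E) (So SF : Set E) : Prop :=
  ∀ s ∈ A.lang, Faulty SF s →
    ∃ t : List E, s ++ t ∈ A.lang ∧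
      ∀ w ∈ A.lang, proj So w = proj So (s ++ t) → Faulty SF w

/-! Every word of `L(G)` reaches at least one state, so when `QF` records faultiness of the word
read, `δ(I,s) ⊆ QF` says exactly that `s` is faulty and `R_G(st) ⊆ QF` says exactly that every
word of `L(G)` observationally equivalent to `st` is faulty: the two conditions are the same formula. -/

section StateRecording

variable {Q E : Type} {A : NFA' Q E} {QF : Set Q} {P : List E → Prop}

theorem NFA'.run_subset_iff (hrec : ∀ s ∈ A.lang, ∀ x ∈ A.run s A.I, (x ∈ QF ↔ P s))
    {s : List E} (hs : s ∈ A.lang) : A.run s A.I ⊆ QF ↔ P s := by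
  obtain ⟨x, hx⟩ := id (hs : (A.run s A.I).Nonempty)
  exact ⟨fun hsub => (hrec s hs x hx).1 (hsub hx), fun hP y hy => (hrec s hs y hy).2 hP⟩

theorem rst_subset_iff (hrec : ∀ s ∈ A.lang, ∀ x ∈ A.run s A.I, (x ∈ QF ↔ P s))
    (So : Set E) (t : List E) :
    Rst A So t ⊆ QF ↔ ∀ w ∈ A.lang, proj So w = proj So t → P w := by
  constructor
  · intro hR w hw hproj
    obtain ⟨y, hy⟩ := id (hw : (A.run w A.I).Nonempty)
    exact (hrec w hw y hy).1 (hR ⟨w, hw, hproj, hy⟩)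
  · rintro hall y ⟨w, hw, hproj, hy⟩
    exact (hrec w hw y hy).2 (hall w hw hproj)

end StateRecording

theorem aDiagnosable_iff_state_based_general {Q E : Type}
    (A : NFA' Q E) (Suo SF : Set E) (QF : Set Q)
    (hpart : ∀ s ∈ A.lang, ∀ x ∈ A.run s A.I, (x ∈ QF ↔ Faulty SF s)) :
    ADiagnosable A Suoᶜ SF ↔
      ∀ s ∈ A.lang, A.run s A.I ⊆ QF →
        ∃ t : List E, s ++ t ∈ A.lang ∧ Rst A Suoᶜ (s ++ t) ⊆ QF := by
  refine forall₂_congr fun s hs => ?_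
  rw [NFA'.run_subset_iff hpart hs]
  simp only [rst_subset_iff hpart]

/-- if the state space is partitioned as `Q = Q_N ∪ Q_F` such that
states reached by a word lie in `Q_F` iff the word is faulty (and in `Q_N`
otherwise), then `G` is A-diagnosable w.r.t. `Σ_uo` and `Σ_F` iff for every
`s ∈ L(G)` with `δ(I,s) ⊆ Q_F` there is `t ∈ L(G)/s` with `R_G(st) ⊆ Q_F`. -/
theorem aDiagnosable_iff_state_based {Q E : Type}
    (A : NFA' Q E) (Suo SF : Set E) (QN QF : Set Q)
    (hunion : QN ∪ QF = Set.univ) (hdisj : QN ∩ QF = ∅)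
    (hpart : ∀ s ∈ A.lang, ∀ x ∈ A.run s A.I, (x ∈ QF ↔ Faulty SF s)) :
    ADiagnosable A Suoᶜ SF ↔
      ∀ s ∈ A.lang, A.run s A.I ⊆ QF →
        ∃ t : List E, s ++ t ∈ A.lang ∧ Rst A Suoᶜ (s ++ t) ⊆ QF :=
  aDiagnosable_iff_state_based_general A Suo SF QF hpart
end
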